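/- arXiv:2202.10105 — 2 statements merged into one kernel-verified Lean document; each statement's English description precedes it below -/
import Mathlib

section
/- Let d ≥ 2 be an integer and p > 0. Then there exists a constant C > 0 such that for all t ≥ 0: ∫₀ᵗ (1 + (t−τ)²)^{−(d−1)/2}(1 + τ²)^{−p/2} dτ is bounded by: C·(1 + log(1+t²))/(1+t²)^{p/2} if d = 2 and 0 < p ≤ 1; C/(1+t²)^{1/2} if d = 2 and p > 1; C/(1+t²)^{p/2} if d > 2 and 0 < p ≤ 1; and C/(1+t²)^{r/2} with r := min(d−1, p) if d > 2 and p > 1. -/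
open MeasureTheory Real


lemma one_add_sq_pos (x : ℝ) : 0 < 1 + x ^ 2 := by positivity

lemma cont_inv_rpow (e : ℝ) : Continuous (fun τ : ℝ => ((1 + τ ^ 2) ^ e)⁻¹) := by
  apply Continuous.inv₀
  · exact (by continuity : Continuous fun τ:ℝ => 1 + τ^2).rpow_const (fun x => Or.inl (by positivity))
  · intro x; positivity

lemma intble (e : ℝ) (u v : ℝ) : IntervalIntegrable (fun τ : ℝ => ((1 + τ ^ 2) ^ e)⁻¹) volume u v :=
  (cont_inv_rpow e).intervalIntegrable u v

lemma phi_nonneg (e t : ℝ) (ht : 0 ≤ t) : 0 ≤ ∫ τ in (0:ℝ)..t, ((1 + τ ^ 2) ^ e)⁻¹ := by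
  apply intervalIntegral.integral_nonneg ht
  intro x _; positivity

/-- For e > 1/2 the integral is uniformly bounded. -/
lemma phi_le_of_half_lt (e : ℝ) (he : 1/2 < e) (t : ℝ) (ht : 0 ≤ t) :
    (∫ τ in (0:ℝ)..t, ((1 + τ ^ 2) ^ e)⁻¹) ≤ 1 + 1/(2*e-1) := by
  have hden : (0:ℝ) < 2*e-1 := by linarith
  rcases le_or_gt t 1 with h1 | h1
  · have : (∫ τ in (0:ℝ)..t, ((1 + τ ^ 2) ^ e)⁻¹) ≤ ∫ τ in (0:ℝ)..t, (1:ℝ) := by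
      apply intervalIntegral.integral_mono_on ht (intble e 0 t)
        (intervalIntegrable_const)
      intro x hx
      rw [inv_le_one_iff₀]
      right
      exact Real.one_le_rpow (by nlinarith [sq_nonneg x]) (by linarith)
    simp at this
    have h2 : (0:ℝ) ≤ 1/(2*e-1) := by positivity
    linarith
  · have hsplit : (∫ τ in (0:ℝ)..1, ((1 + τ ^ 2) ^ e)⁻¹) + (∫ τ in (1:ℝ)..t, ((1 + τ ^ 2) ^ e)⁻¹)
        = ∫ τ in (0:ℝ)..t, ((1 + τ ^ 2) ^ e)⁻¹ :=
      intervalIntegral.integral_add_adjacent_intervals (intble e 0 1) (intble e 1 t)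
    have hI1 : (∫ τ in (0:ℝ)..1, ((1 + τ ^ 2) ^ e)⁻¹) ≤ 1 := by
      have : (∫ τ in (0:ℝ)..1, ((1 + τ ^ 2) ^ e)⁻¹) ≤ ∫ τ in (0:ℝ)..1, (1:ℝ) := by
        apply intervalIntegral.integral_mono_on zero_le_one (intble e 0 1) intervalIntegrable_const
        intro x hx
        rw [inv_le_one_iff₀]; right
        exact Real.one_le_rpow (by nlinarith [sq_nonneg x]) (by linarith)
      simpa using this
    have hI2 : (∫ τ in (1:ℝ)..t, ((1 + τ ^ 2) ^ e)⁻¹) ≤ 1/(2*e-1) := by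
      have hmono : (∫ τ in (1:ℝ)..t, ((1 + τ ^ 2) ^ e)⁻¹) ≤ ∫ τ in (1:ℝ)..t, τ ^ (-(2*e)) := by
        apply intervalIntegral.integral_mono_on h1.le (intble e 1 t)
        · apply ContinuousOn.intervalIntegrable
          apply ContinuousOn.rpow_const (by fun_prop)
          intro x hx
          left
          rw [Set.uIcc_of_le h1.le] at hx
          linarith [hx.1]
        · intro x hx
          rw [Real.rpow_neg (by linarith [hx.1] : (0:ℝ) ≤ x)]
          apply inv_anti₀ (Real.rpow_pos_of_pos (lt_of_lt_of_le one_pos hx.1) _)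
          calc x ^ (2*e) = (x^2) ^ e := by
                rw [← Real.rpow_natCast x 2, ← Real.rpow_mul (by linarith [hx.1])]
                norm_num [mul_comm]
            _ ≤ (1 + x^2) ^ e := Real.rpow_le_rpow (by positivity) (by linarith) (by linarith)
      have hcalc : (∫ τ in (1:ℝ)..t, τ ^ (-(2*e))) = (t ^ (-(2*e)+1) - 1 ^ (-(2*e)+1)) / (-(2*e)+1) := by
        apply integral_rpow
        right
        constructor
        · intro h; linarith
        · rw [Set.uIcc_of_le h1.le]; intro h; linarith [h.1]
      have ht0 : (0:ℝ) ≤ t ^ (-(2*e)+1) := Real.rpow_nonneg (by linarith) _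
      have heq : (t ^ (-(2*e)+1) - (1:ℝ) ^ (-(2*e)+1)) / (-(2*e)+1)
          = (1 - t ^ (-(2*e)+1)) / (2*e-1) := by
        rw [Real.one_rpow]
        have h2 : (-(2*e)+1) ≠ 0 := by intro h; rw [show -(2*e)+1 = -(2*e-1) by ring] at h; simp at h; linarith
        field_simp
        ring
      calc (∫ τ in (1:ℝ)..t, ((1 + τ ^ 2) ^ e)⁻¹) ≤ _ := hmono
        _ = (1 - t ^ (-(2*e)+1)) / (2*e-1) := by rw [hcalc, heq]
        _ ≤ 1/(2*e-1) := by gcongr <;> linarith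
    linarith [hsplit]

lemma rpow_two_mul (x e : ℝ) (hx : 0 ≤ x) : (x ^ 2) ^ e = x ^ (2*e) := by
  rw [← Real.rpow_natCast x 2, ← Real.rpow_mul hx]
  norm_num

lemma log_int (t : ℝ) (ht : 0 ≤ t) : (∫ τ in (0:ℝ)..t, (1+τ)⁻¹) = Real.log (1+t) := by
  have := intervalIntegral.integral_comp_add_left (a := (0:ℝ)) (b := t) (fun x : ℝ => x⁻¹) 1
  simp only [add_zero] at this
  rw [this, integral_inv]
  · rw [div_one]
  · rw [Set.uIcc_of_le (by linarith)]
    intro h; linarith [h.1]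

lemma phi_le_of_le_half (e : ℝ) (he0 : 0 < e) (he : e ≤ 1/2) (t : ℝ) (ht : 0 ≤ t) :
    (∫ τ in (0:ℝ)..t, ((1 + τ ^ 2) ^ e)⁻¹) ≤ 2 * (1+t) ^ (1-2*e) * Real.log (1+t) := by
  have key : ∀ x ∈ Set.Icc (0:ℝ) t, ((1 + x ^ 2) ^ e)⁻¹ ≤ 2 * (1+t) ^ (1-2*e) * (1+x)⁻¹ := by
    intro x hx
    obtain ⟨hx0, hxt⟩ := hx
    have h1x : (0:ℝ) < 1 + x := by linarith
    have hA : (0:ℝ) < (1 + x^2) ^ e := by positivity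
    have hB : (0:ℝ) < (1+x) ^ (2*e) := Real.rpow_pos_of_pos h1x _
    have h1 : (1+x) ^ (2*e) ≤ 2 * (1 + x^2) ^ e := by
      have e1 : (1+x) ^ (2*e) = ((1+x)^2) ^ e := (rpow_two_mul _ _ h1x.le).symm
      have e2 : ((1+x)^2 : ℝ) ^ e ≤ (2*(1+x^2)) ^ e :=
        Real.rpow_le_rpow (by positivity) (by nlinarith [sq_nonneg (1-x)]) he0.le
      have e3 : ((2:ℝ)*(1+x^2)) ^ e = 2 ^ e * (1+x^2) ^ e :=
        Real.mul_rpow (by norm_num) (by positivity)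
      have e4 : (2:ℝ) ^ e ≤ 2 := by
        calc (2:ℝ) ^ e ≤ 2 ^ (1:ℝ) := Real.rpow_le_rpow_of_exponent_le (by norm_num) (by linarith)
          _ = 2 := by norm_num
      calc (1+x) ^ (2*e) = ((1+x)^2) ^ e := e1
        _ ≤ 2 ^ e * (1+x^2) ^ e := by rw [← e3]; exact e2
        _ ≤ 2 * (1+x^2) ^ e := by nlinarith
    have h2 : ((1 + x ^ 2) ^ e)⁻¹ ≤ 2 * ((1+x) ^ (2*e))⁻¹ := by
      rw [inv_eq_one_div, show 2*((1+x) ^ (2*e))⁻¹ = 2/((1+x) ^ (2*e)) by ring,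
        div_le_div_iff₀ hA hB]
      linarith
    have h3 : ((1+x) ^ (2*e))⁻¹ = (1+x) ^ (1-2*e) * (1+x)⁻¹ := by
      rw [← Real.rpow_neg h1x.le, show -(2*e) = (1-2*e) + (-1) by ring,
        Real.rpow_add h1x, Real.rpow_neg_one]
    have h4 : (1+x) ^ (1-2*e) ≤ (1+t) ^ (1-2*e) :=
      Real.rpow_le_rpow h1x.le (by linarith) (by linarith)
    calc ((1 + x ^ 2) ^ e)⁻¹ ≤ 2 * ((1+x) ^ (2*e))⁻¹ := h2
      _ = 2 * ((1+x) ^ (1-2*e) * (1+x)⁻¹) := by rw [h3]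
      _ ≤ 2 * ((1+t) ^ (1-2*e) * (1+x)⁻¹) := by
          have : (0:ℝ) ≤ (1+x)⁻¹ := by positivity
          nlinarith
      _ = 2 * (1+t) ^ (1-2*e) * (1+x)⁻¹ := by ring
  have hint : IntervalIntegrable (fun x : ℝ => 2 * (1+t) ^ (1-2*e) * (1+x)⁻¹) volume 0 t := by
    apply ContinuousOn.intervalIntegrable
    apply ContinuousOn.mul continuousOn_const
    apply ContinuousOn.inv₀ (by fun_prop)
    intro x hx
    rw [Set.uIcc_of_le ht] at hx
    have := hx.1
    positivity
  calc (∫ τ in (0:ℝ)..t, ((1 + τ ^ 2) ^ e)⁻¹)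
      ≤ ∫ τ in (0:ℝ)..t, 2 * (1+t) ^ (1-2*e) * (1+τ)⁻¹ :=
        intervalIntegral.integral_mono_on ht (intble e 0 t) hint key
    _ = 2 * (1+t) ^ (1-2*e) * ∫ τ in (0:ℝ)..t, (1+τ)⁻¹ :=
        intervalIntegral.integral_const_mul _ _
    _ = 2 * (1+t) ^ (1-2*e) * Real.log (1+t) := by rw [log_int t ht]

lemma cont_K (a b t : ℝ) : Continuous (fun τ : ℝ => ((1 + (t-τ) ^ 2) ^ a)⁻¹ * ((1 + τ ^ 2) ^ b)⁻¹) := by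
  apply Continuous.mul
  · apply Continuous.inv₀
    · exact (by continuity : Continuous fun τ:ℝ => 1 + (t-τ)^2).rpow_const (fun x => Or.inl (by positivity))
    · intro x; positivity
  · exact cont_inv_rpow b

lemma inv_rpow_le (c s t : ℝ) (hc : 0 < c) (ht : 0 ≤ t) (hs : t/2 ≤ s) :
    ((1+s^2)^c)⁻¹ ≤ 4^c * ((1+t^2)^c)⁻¹ := by
  have hs0 : (0:ℝ) ≤ s := le_trans (by linarith) hs
  have h1 : (1+t^2)/4 ≤ 1+s^2 := by nlinarith
  have h2 : ((1+t^2)/4)^c ≤ (1+s^2)^c := Real.rpow_le_rpow (by positivity) h1 hc.le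
  have h3 : (((1:ℝ)+t^2)/4)^c = (1+t^2)^c / 4^c := Real.div_rpow (by positivity) (by norm_num) c
  rw [h3] at h2
  have h4 := inv_anti₀ (by positivity) h2
  rw [inv_div] at h4
  calc ((1+s^2)^c)⁻¹ ≤ 4^c / (1+t^2)^c := h4
    _ = 4^c * ((1+t^2)^c)⁻¹ := (div_eq_mul_inv _ _).symm

lemma phi_mono (e t u : ℝ) (hu : 0 ≤ u) (hut : u ≤ t) :
    (∫ τ in (0:ℝ)..u, ((1 + τ ^ 2) ^ e)⁻¹) ≤ ∫ τ in (0:ℝ)..t, ((1 + τ ^ 2) ^ e)⁻¹ := by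
  have := intervalIntegral.integral_add_adjacent_intervals (intble e 0 u) (intble e u t)
  have h2 : (0:ℝ) ≤ ∫ τ in u..t, ((1 + τ ^ 2) ^ e)⁻¹ := by
    apply intervalIntegral.integral_nonneg hut
    intro x _; positivity
  linarith

lemma main_split (a b : ℝ) (ha : 0 < a) (hb : 0 < b) (t : ℝ) (ht : 0 ≤ t) :
    (∫ τ in (0:ℝ)..t, ((1 + (t-τ) ^ 2) ^ a)⁻¹ * ((1 + τ ^ 2) ^ b)⁻¹)
      ≤ 4^a * ((1+t^2)^a)⁻¹ * (∫ τ in (0:ℝ)..t, ((1 + τ ^ 2) ^ b)⁻¹)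
        + 4^b * ((1+t^2)^b)⁻¹ * (∫ τ in (0:ℝ)..t, ((1 + τ ^ 2) ^ a)⁻¹) := by
  have hK := (cont_K a b t).intervalIntegrable (μ := volume)
  have hsplit := intervalIntegral.integral_add_adjacent_intervals (μ := volume)
    (hK 0 (t/2)) (hK (t/2) t)
  have hI1 : (∫ τ in (0:ℝ)..(t/2), ((1 + (t-τ) ^ 2) ^ a)⁻¹ * ((1 + τ ^ 2) ^ b)⁻¹)
      ≤ 4^a * ((1+t^2)^a)⁻¹ * (∫ τ in (0:ℝ)..(t/2), ((1 + τ ^ 2) ^ b)⁻¹) := by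
    rw [← intervalIntegral.integral_const_mul]
    apply intervalIntegral.integral_mono_on (by linarith) (hK 0 (t/2))
      (((continuous_const.mul (cont_inv_rpow b))).intervalIntegrable 0 (t/2))
    intro x hx
    have hb0 : (0:ℝ) ≤ ((1 + x ^ 2) ^ b)⁻¹ := by positivity
    have := inv_rpow_le a (t-x) t ha ht (by linarith [hx.2])
    calc ((1 + (t-x) ^ 2) ^ a)⁻¹ * ((1 + x ^ 2) ^ b)⁻¹
        ≤ (4^a * ((1+t^2)^a)⁻¹) * ((1 + x ^ 2) ^ b)⁻¹ := by
          apply mul_le_mul_of_nonneg_right this hb0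
      _ = 4^a * ((1+t^2)^a)⁻¹ * ((1 + x ^ 2) ^ b)⁻¹ := by ring
  have hI2 : (∫ τ in (t/2)..t, ((1 + (t-τ) ^ 2) ^ a)⁻¹ * ((1 + τ ^ 2) ^ b)⁻¹)
      ≤ 4^b * ((1+t^2)^b)⁻¹ * (∫ τ in (0:ℝ)..(t/2), ((1 + τ ^ 2) ^ a)⁻¹) := by
    have step : (∫ τ in (t/2)..t, ((1 + (t-τ) ^ 2) ^ a)⁻¹ * ((1 + τ ^ 2) ^ b)⁻¹)
        ≤ ∫ τ in (t/2)..t, 4^b * ((1+t^2)^b)⁻¹ * ((1 + (t-τ) ^ 2) ^ a)⁻¹ := by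
      apply intervalIntegral.integral_mono_on (by linarith) (hK (t/2) t)
      · apply Continuous.intervalIntegrable
        apply Continuous.mul continuous_const
        apply Continuous.inv₀
        · exact (by continuity : Continuous fun τ:ℝ => 1 + (t-τ)^2).rpow_const (fun x => Or.inl (by positivity))
        · intro x; positivity
      · intro x hx
        have ha0 : (0:ℝ) ≤ ((1 + (t-x) ^ 2) ^ a)⁻¹ := by positivity
        have := inv_rpow_le b x t hb ht hx.1
        calc ((1 + (t-x) ^ 2) ^ a)⁻¹ * ((1 + x ^ 2) ^ b)⁻¹
            ≤ ((1 + (t-x) ^ 2) ^ a)⁻¹ * (4^b * ((1+t^2)^b)⁻¹) :=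
              mul_le_mul_of_nonneg_left this ha0
          _ = 4^b * ((1+t^2)^b)⁻¹ * ((1 + (t-x) ^ 2) ^ a)⁻¹ := by ring
    have sub : (∫ τ in (t/2)..t, ((1 + (t-τ) ^ 2) ^ a)⁻¹)
        = ∫ τ in (0:ℝ)..(t/2), ((1 + τ ^ 2) ^ a)⁻¹ := by
      have := intervalIntegral.integral_comp_sub_left (a := t/2) (b := t)
        (fun x : ℝ => ((1 + x ^ 2) ^ a)⁻¹) t
      rw [show t - t/2 = t/2 by ring] at this
      simpa using this
    rw [intervalIntegral.integral_const_mul, sub] at step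
    exact step
  have hmono_b := phi_mono b t (t/2) (by linarith) (by linarith)
  have hmono_a := phi_mono a t (t/2) (by linarith) (by linarith)
  have c1 : (0:ℝ) ≤ 4^a * ((1+t^2)^a)⁻¹ := by positivity
  have c2 : (0:ℝ) ≤ 4^b * ((1+t^2)^b)⁻¹ := by positivity
  nlinarith [mul_le_mul_of_nonneg_left hmono_b c1, mul_le_mul_of_nonneg_left hmono_a c2]

lemma four_rpow_half : (4:ℝ) ^ ((1:ℝ)/2) = 2 := by
  rw [show (4:ℝ) = 2^(2:ℕ) by norm_num, ← Real.rpow_natCast 2 2, ← Real.rpow_mul (by norm_num)]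
  norm_num

lemma one_add_le (t : ℝ) (ht : 0 ≤ t) (s : ℝ) (hs0 : 0 ≤ s) (hs : s ≤ 1) :
    (1+t) ^ s ≤ 2 * (1+t^2) ^ (s/2) := by
  have h1 : (1+t) ^ s = ((1+t)^2) ^ (s/2) := by
    rw [rpow_two_mul _ _ (by linarith)]; ring_nf
  have h2 : (((1:ℝ)+t)^2) ^ (s/2) ≤ (2*(1+t^2)) ^ (s/2) :=
    Real.rpow_le_rpow (by positivity) (by nlinarith [sq_nonneg (1-t)]) (by linarith)
  have h3 : ((2:ℝ)*(1+t^2)) ^ (s/2) = 2^(s/2) * (1+t^2)^(s/2) :=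
    Real.mul_rpow (by norm_num) (by positivity)
  have h4 : (2:ℝ)^(s/2) ≤ 2 := by
    calc (2:ℝ)^(s/2) ≤ 2^(1:ℝ) := Real.rpow_le_rpow_of_exponent_le (by norm_num) (by linarith)
      _ = 2 := by norm_num
  have h5 : (0:ℝ) ≤ (1+t^2)^(s/2) := by positivity
  rw [h1]
  calc (((1:ℝ)+t)^2) ^ (s/2) ≤ 2^(s/2) * (1+t^2)^(s/2) := h3 ▸ h2
    _ ≤ 2 * (1+t^2)^(s/2) := by nlinarith

lemma log_one_add_le (t : ℝ) (ht : 0 ≤ t) : Real.log (1+t) ≤ 1 + Real.log (1+t^2) := by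
  have hL1 : (1:ℝ) ≤ 1+t^2 := by nlinarith
  have h1 : ((1:ℝ)+t)^2 ≤ 2*(1+t^2) := by nlinarith [sq_nonneg (1-t)]
  have h2 : Real.log (((1:ℝ)+t)^2) ≤ Real.log (2*(1+t^2)) :=
    Real.log_le_log (by positivity) h1
  rw [Real.log_pow, Real.log_mul (by norm_num) (by positivity)] at h2
  have h3 : Real.log 2 ≤ 1 := by
    calc Real.log 2 ≤ 2 - 1 := Real.log_le_sub_one_of_pos (by norm_num)
      _ = 1 := by norm_num
  have h4 : 0 ≤ Real.log (1+t^2) := Real.log_nonneg hL1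
  push_cast at h2
  linarith

lemma one_add_log_le (L ε : ℝ) (hL : 1 ≤ L) (hε : 0 < ε) :
    1 + Real.log L ≤ (1 + 1/ε) * L ^ ε := by
  have h1 : Real.log L ≤ L ^ ε / ε := Real.log_le_rpow_div (by linarith) hε
  have h2 : (1:ℝ) ≤ L ^ ε := Real.one_le_rpow hL hε.le
  have : (1+1/ε) * L ^ ε = L ^ ε + L ^ ε/ε := by ring
  rw [this]
  linarith

lemma inv_rpow_mul_rpow (L x y : ℝ) (hL : 0 < L) :
    (L ^ x)⁻¹ * L ^ y = L ^ (y - x) := by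
  rw [← Real.rpow_neg hL.le, ← Real.rpow_add hL]
  ring_nf

lemma rpow_le_rpow_exp (L x y : ℝ) (hL : 1 ≤ L) (h : x ≤ y) : L ^ x ≤ L ^ y :=
  Real.rpow_le_rpow_of_exponent_le hL h


lemma mull {x y X Y : ℝ} (hx : x ≤ X) (hy : y ≤ Y) (hy0 : 0 ≤ y) (hX0 : 0 ≤ X) :
    x*y ≤ X*Y := mul_le_mul hx hy hy0 hX0

lemma rpow_inv_anti (L x y : ℝ) (hL : 1 ≤ L) (h : x ≤ y) : (L ^ y)⁻¹ ≤ (L ^ x)⁻¹ :=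
  inv_anti₀ (Real.rpow_pos_of_pos (by linarith) _) (rpow_le_rpow_exp L x y hL h)

lemma phib_le (b : ℝ) (hb0 : 0 < b) (hb : b ≤ 1/2) (t : ℝ) (ht : 0 ≤ t) :
    (∫ τ in (0:ℝ)..t, ((1 + τ ^ 2) ^ b)⁻¹)
      ≤ 4 * (1+t^2) ^ ((1-2*b)/2) * (1 + Real.log (1+t^2)) := by
  have h1 := phi_le_of_le_half b hb0 hb t ht
  have h2 := one_add_le t ht (1-2*b) (by linarith) (by linarith)
  have h3 := log_one_add_le t ht
  have hlog0 : 0 ≤ Real.log (1+t) := Real.log_nonneg (by linarith)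
  have h4 : (1+t) ^ (1-2*b) * Real.log (1+t)
      ≤ (2 * (1+t^2) ^ ((1-2*b)/2)) * (1 + Real.log (1+t^2)) :=
    mull h2 h3 hlog0 (by positivity)
  calc (∫ τ in (0:ℝ)..t, ((1 + τ ^ 2) ^ b)⁻¹)
      ≤ 2 * (1+t) ^ (1-2*b) * Real.log (1+t) := h1
    _ = 2 * ((1+t) ^ (1-2*b) * Real.log (1+t)) := by ring
    _ ≤ 2 * ((2 * (1+t^2) ^ ((1-2*b)/2)) * (1 + Real.log (1+t^2))) := by linarith
    _ = 4 * (1+t^2) ^ ((1-2*b)/2) * (1 + Real.log (1+t^2)) := by ring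

lemma phihalf_le (t : ℝ) (ht : 0 ≤ t) :
    (∫ τ in (0:ℝ)..t, ((1 + τ ^ 2) ^ ((1:ℝ)/2))⁻¹) ≤ 2 * (1 + Real.log (1+t^2)) := by
  have h1 := phi_le_of_le_half (1/2) (by norm_num) (le_refl _) t ht
  rw [show (1:ℝ)-2*(1/2) = 0 by norm_num, Real.rpow_zero] at h1
  have h3 := log_one_add_le t ht
  calc (∫ τ in (0:ℝ)..t, ((1 + τ ^ 2) ^ ((1:ℝ)/2))⁻¹)
      ≤ 2 * 1 * Real.log (1+t) := h1
    _ ≤ 2 * (1 + Real.log (1+t^2)) := by linarith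

lemma case1 (b : ℝ) (hb0 : 0 < b) (hb : b ≤ 1/2) (t : ℝ) (ht : 0 ≤ t) :
    (∫ τ in (0:ℝ)..t, ((1 + (t-τ) ^ 2) ^ ((1:ℝ)/2))⁻¹ * ((1 + τ ^ 2) ^ b)⁻¹)
      ≤ 12 * (1 + Real.log (1+t^2)) / (1+t^2) ^ b := by
  have hL : (0:ℝ) < 1+t^2 := by positivity
  have hL1 : (1:ℝ) ≤ 1+t^2 := by nlinarith
  have hG0 : (0:ℝ) ≤ 1 + Real.log (1+t^2) := by
    have := Real.log_nonneg hL1; linarith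
  have main := main_split (1/2) b (by norm_num) hb0 t ht
  have pb := phib_le b hb0 hb t ht
  have pa := phihalf_le t ht
  have hphib0 := phi_nonneg b t ht
  have hphia0 := phi_nonneg (1/2) t ht
  have hinvhalf : (0:ℝ) ≤ ((1+t^2) ^ ((1:ℝ)/2))⁻¹ := by positivity
  have hinvb : (0:ℝ) ≤ ((1+t^2) ^ b)⁻¹ := by positivity
  have t1 : (4:ℝ)^((1:ℝ)/2) * ((1+t^2)^((1:ℝ)/2))⁻¹ * (∫ τ in (0:ℝ)..t, ((1 + τ ^ 2) ^ b)⁻¹)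
      ≤ 8 * (1 + Real.log (1+t^2)) * ((1+t^2) ^ b)⁻¹ := by
    rw [four_rpow_half]
    calc 2 * ((1+t^2)^((1:ℝ)/2))⁻¹ * (∫ τ in (0:ℝ)..t, ((1 + τ ^ 2) ^ b)⁻¹)
        ≤ 2 * ((1+t^2)^((1:ℝ)/2))⁻¹ * (4 * (1+t^2) ^ ((1-2*b)/2) * (1 + Real.log (1+t^2))) := by
          apply mul_le_mul_of_nonneg_left pb (by positivity)
      _ = 8 * (1 + Real.log (1+t^2)) * (((1+t^2)^((1:ℝ)/2))⁻¹ * (1+t^2) ^ ((1-2*b)/2)) := by ring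
      _ = 8 * (1 + Real.log (1+t^2)) * ((1+t^2) ^ b)⁻¹ := by
          rw [inv_rpow_mul_rpow _ _ _ hL, show (1-2*b)/2 - (1:ℝ)/2 = -b by ring,
            Real.rpow_neg hL.le]
  have t2 : (4:ℝ)^b * ((1+t^2)^b)⁻¹ * (∫ τ in (0:ℝ)..t, ((1 + τ ^ 2) ^ ((1:ℝ)/2))⁻¹)
      ≤ 4 * (1 + Real.log (1+t^2)) * ((1+t^2) ^ b)⁻¹ := by
    have h4b : (4:ℝ)^b ≤ 2 := by
      calc (4:ℝ)^b ≤ 4^((1:ℝ)/2) := Real.rpow_le_rpow_of_exponent_le (by norm_num) hb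
        _ = 2 := four_rpow_half
    calc (4:ℝ)^b * ((1+t^2)^b)⁻¹ * (∫ τ in (0:ℝ)..t, ((1 + τ ^ 2) ^ ((1:ℝ)/2))⁻¹)
        ≤ (2 * ((1+t^2)^b)⁻¹) * (2 * (1 + Real.log (1+t^2))) := by
          apply mull (mul_le_mul_of_nonneg_right h4b hinvb) pa hphia0 (by positivity)
      _ = 4 * (1 + Real.log (1+t^2)) * ((1+t^2) ^ b)⁻¹ := by ring
  calc (∫ τ in (0:ℝ)..t, ((1 + (t-τ) ^ 2) ^ ((1:ℝ)/2))⁻¹ * ((1 + τ ^ 2) ^ b)⁻¹)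
      ≤ _ := main
    _ ≤ 12 * (1 + Real.log (1+t^2)) * ((1+t^2) ^ b)⁻¹ := by linarith
    _ = 12 * (1 + Real.log (1+t^2)) / (1+t^2) ^ b := (div_eq_mul_inv _ _).symm

lemma case2 (b : ℝ) (hb : 1/2 < b) (t : ℝ) (ht : 0 ≤ t) :
    (∫ τ in (0:ℝ)..t, ((1 + (t-τ) ^ 2) ^ ((1:ℝ)/2))⁻¹ * ((1 + τ ^ 2) ^ b)⁻¹)
      ≤ (2*(1+1/(2*b-1)) + 2*4^b*(1+1/(b-1/2))) / (1+t^2) ^ ((1:ℝ)/2) := by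
  have hL : (0:ℝ) < 1+t^2 := by positivity
  have hL1 : (1:ℝ) ≤ 1+t^2 := by nlinarith
  have hden : (0:ℝ) < 2*b-1 := by linarith
  have hε : (0:ℝ) < b-1/2 := by linarith
  have main := main_split (1/2) b (by norm_num) (by linarith) t ht
  have pb := phi_le_of_half_lt b hb t ht
  have pa := phihalf_le t ht
  have hphia0 := phi_nonneg (1/2) t ht
  have hphib0 := phi_nonneg b t ht
  have t1 : (4:ℝ)^((1:ℝ)/2) * ((1+t^2)^((1:ℝ)/2))⁻¹ * (∫ τ in (0:ℝ)..t, ((1 + τ ^ 2) ^ b)⁻¹)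
      ≤ 2*(1+1/(2*b-1)) * ((1+t^2) ^ ((1:ℝ)/2))⁻¹ := by
    rw [four_rpow_half]
    calc 2 * ((1+t^2)^((1:ℝ)/2))⁻¹ * (∫ τ in (0:ℝ)..t, ((1 + τ ^ 2) ^ b)⁻¹)
        ≤ 2 * ((1+t^2)^((1:ℝ)/2))⁻¹ * (1+1/(2*b-1)) := by
          apply mul_le_mul_of_nonneg_left pb (by positivity)
      _ = 2*(1+1/(2*b-1)) * ((1+t^2) ^ ((1:ℝ)/2))⁻¹ := by ring
  have t2 : (4:ℝ)^b * ((1+t^2)^b)⁻¹ * (∫ τ in (0:ℝ)..t, ((1 + τ ^ 2) ^ ((1:ℝ)/2))⁻¹)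
      ≤ 2*4^b*(1+1/(b-1/2)) * ((1+t^2) ^ ((1:ℝ)/2))⁻¹ := by
    have hGle : 1 + Real.log (1+t^2) ≤ (1+1/(b-1/2)) * (1+t^2) ^ (b-1/2) :=
      one_add_log_le _ _ hL1 hε
    calc (4:ℝ)^b * ((1+t^2)^b)⁻¹ * (∫ τ in (0:ℝ)..t, ((1 + τ ^ 2) ^ ((1:ℝ)/2))⁻¹)
        ≤ (4:ℝ)^b * ((1+t^2)^b)⁻¹ * (2 * ((1+1/(b-1/2)) * (1+t^2) ^ (b-1/2))) := by
          apply mul_le_mul_of_nonneg_left ?_ (by positivity)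
          calc (∫ τ in (0:ℝ)..t, ((1 + τ ^ 2) ^ ((1:ℝ)/2))⁻¹)
              ≤ 2 * (1 + Real.log (1+t^2)) := pa
            _ ≤ 2 * ((1+1/(b-1/2)) * (1+t^2) ^ (b-1/2)) := by linarith
      _ = 2*4^b*(1+1/(b-1/2)) * (((1+t^2)^b)⁻¹ * (1+t^2) ^ (b-1/2)) := by ring
      _ = 2*4^b*(1+1/(b-1/2)) * ((1+t^2) ^ ((1:ℝ)/2))⁻¹ := by
          rw [inv_rpow_mul_rpow _ _ _ hL, show b-1/2 - b = -(1/2 : ℝ) by ring,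
            Real.rpow_neg hL.le]
  calc (∫ τ in (0:ℝ)..t, ((1 + (t-τ) ^ 2) ^ ((1:ℝ)/2))⁻¹ * ((1 + τ ^ 2) ^ b)⁻¹)
      ≤ _ := main
    _ ≤ (2*(1+1/(2*b-1)) + 2*4^b*(1+1/(b-1/2))) * ((1+t^2) ^ ((1:ℝ)/2))⁻¹ := by linarith
    _ = (2*(1+1/(2*b-1)) + 2*4^b*(1+1/(b-1/2))) / (1+t^2) ^ ((1:ℝ)/2) := (div_eq_mul_inv _ _).symm

lemma case3 (a b : ℝ) (ha : 1 ≤ a) (hb0 : 0 < b) (hb : b ≤ 1/2) (t : ℝ) (ht : 0 ≤ t) :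
    (∫ τ in (0:ℝ)..t, ((1 + (t-τ) ^ 2) ^ a)⁻¹ * ((1 + τ ^ 2) ^ b)⁻¹)
      ≤ (12*4^a + 2*(1+1/(2*a-1))) / (1+t^2) ^ b := by
  have hL : (0:ℝ) < 1+t^2 := by positivity
  have hL1 : (1:ℝ) ≤ 1+t^2 := by nlinarith
  have main := main_split a b (by linarith) hb0 t ht
  have pb := phib_le b hb0 hb t ht
  have pa := phi_le_of_half_lt a (by linarith) t ht
  have hphib0 := phi_nonneg b t ht
  have hphia0 := phi_nonneg a t ht
  have t1 : (4:ℝ)^a * ((1+t^2)^a)⁻¹ * (∫ τ in (0:ℝ)..t, ((1 + τ ^ 2) ^ b)⁻¹)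
      ≤ 12*4^a * ((1+t^2) ^ b)⁻¹ := by
    have hGle : 1 + Real.log (1+t^2) ≤ (1+1/(1/2)) * (1+t^2) ^ ((1:ℝ)/2) :=
      one_add_log_le _ _ hL1 (by norm_num)
    have hGle3 : 1 + Real.log (1+t^2) ≤ 3 * (1+t^2) ^ ((1:ℝ)/2) := by
      calc 1 + Real.log (1+t^2) ≤ (1+1/(1/2)) * (1+t^2) ^ ((1:ℝ)/2) := hGle
        _ = 3 * (1+t^2) ^ ((1:ℝ)/2) := by norm_num
    calc (4:ℝ)^a * ((1+t^2)^a)⁻¹ * (∫ τ in (0:ℝ)..t, ((1 + τ ^ 2) ^ b)⁻¹)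
        ≤ (4:ℝ)^a * ((1+t^2)^a)⁻¹ * (4 * (1+t^2) ^ ((1-2*b)/2) * (3 * (1+t^2) ^ ((1:ℝ)/2))) := by
          apply mul_le_mul_of_nonneg_left ?_ (by positivity)
          calc (∫ τ in (0:ℝ)..t, ((1 + τ ^ 2) ^ b)⁻¹)
              ≤ 4 * (1+t^2) ^ ((1-2*b)/2) * (1 + Real.log (1+t^2)) := pb
            _ ≤ 4 * (1+t^2) ^ ((1-2*b)/2) * (3 * (1+t^2) ^ ((1:ℝ)/2)) := by
                apply mul_le_mul_of_nonneg_left hGle3 (by positivity)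
      _ = 12*4^a * (((1+t^2)^a)⁻¹ * ((1+t^2) ^ ((1-2*b)/2) * (1+t^2) ^ ((1:ℝ)/2))) := by ring
      _ = 12*4^a * ((1+t^2) ^ (1-b-a)) := by
          rw [← Real.rpow_add hL, ← Real.rpow_neg hL.le, ← Real.rpow_add hL]
          congr 1
          ring_nf
      _ ≤ 12*4^a * ((1+t^2) ^ (-b)) := by
          apply mul_le_mul_of_nonneg_left
            (rpow_le_rpow_exp _ _ _ hL1 (by linarith)) (by positivity)
      _ = 12*4^a * ((1+t^2) ^ b)⁻¹ := by rw [Real.rpow_neg hL.le]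
  have t2 : (4:ℝ)^b * ((1+t^2)^b)⁻¹ * (∫ τ in (0:ℝ)..t, ((1 + τ ^ 2) ^ a)⁻¹)
      ≤ 2*(1+1/(2*a-1)) * ((1+t^2) ^ b)⁻¹ := by
    have h4b : (4:ℝ)^b ≤ 2 := by
      calc (4:ℝ)^b ≤ 4^((1:ℝ)/2) := Real.rpow_le_rpow_of_exponent_le (by norm_num) hb
        _ = 2 := four_rpow_half
    have hinvb : (0:ℝ) ≤ ((1+t^2) ^ b)⁻¹ := by positivity
    calc (4:ℝ)^b * ((1+t^2)^b)⁻¹ * (∫ τ in (0:ℝ)..t, ((1 + τ ^ 2) ^ a)⁻¹)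
        ≤ (2 * ((1+t^2)^b)⁻¹) * (1+1/(2*a-1)) := by
          apply mull (mul_le_mul_of_nonneg_right h4b hinvb) pa hphia0 (by positivity)
      _ = 2*(1+1/(2*a-1)) * ((1+t^2) ^ b)⁻¹ := by ring
  calc (∫ τ in (0:ℝ)..t, ((1 + (t-τ) ^ 2) ^ a)⁻¹ * ((1 + τ ^ 2) ^ b)⁻¹)
      ≤ _ := main
    _ ≤ (12*4^a + 2*(1+1/(2*a-1))) * ((1+t^2) ^ b)⁻¹ := by linarith
    _ = (12*4^a + 2*(1+1/(2*a-1))) / (1+t^2) ^ b := (div_eq_mul_inv _ _).symm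

lemma case4 (a b : ℝ) (ha : 1/2 < a) (hb : 1/2 < b) (t : ℝ) (ht : 0 ≤ t) :
    (∫ τ in (0:ℝ)..t, ((1 + (t-τ) ^ 2) ^ a)⁻¹ * ((1 + τ ^ 2) ^ b)⁻¹)
      ≤ (4^a*(1+1/(2*b-1)) + 4^b*(1+1/(2*a-1))) / (1+t^2) ^ (min a b) := by
  have hL : (0:ℝ) < 1+t^2 := by positivity
  have hL1 : (1:ℝ) ≤ 1+t^2 := by nlinarith
  have hdb : (0:ℝ) < 2*b-1 := by linarith
  have hda : (0:ℝ) < 2*a-1 := by linarith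
  have main := main_split a b (by linarith) (by linarith) t ht
  have pb := phi_le_of_half_lt b hb t ht
  have pa := phi_le_of_half_lt a ha t ht
  have hphib0 := phi_nonneg b t ht
  have hphia0 := phi_nonneg a t ht
  have hma : ((1+t^2)^a)⁻¹ ≤ ((1+t^2)^(min a b))⁻¹ :=
    rpow_inv_anti _ _ _ hL1 (min_le_left a b)
  have hmb : ((1+t^2)^b)⁻¹ ≤ ((1+t^2)^(min a b))⁻¹ :=
    rpow_inv_anti _ _ _ hL1 (min_le_right a b)
  have t1 : (4:ℝ)^a * ((1+t^2)^a)⁻¹ * (∫ τ in (0:ℝ)..t, ((1 + τ ^ 2) ^ b)⁻¹)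
      ≤ 4^a*(1+1/(2*b-1)) * ((1+t^2) ^ (min a b))⁻¹ := by
    calc (4:ℝ)^a * ((1+t^2)^a)⁻¹ * (∫ τ in (0:ℝ)..t, ((1 + τ ^ 2) ^ b)⁻¹)
        ≤ ((4:ℝ)^a * ((1+t^2)^(min a b))⁻¹) * (1+1/(2*b-1)) := by
          apply mull (mul_le_mul_of_nonneg_left hma (by positivity)) pb hphib0 (by positivity)
      _ = 4^a*(1+1/(2*b-1)) * ((1+t^2) ^ (min a b))⁻¹ := by ring
  have t2 : (4:ℝ)^b * ((1+t^2)^b)⁻¹ * (∫ τ in (0:ℝ)..t, ((1 + τ ^ 2) ^ a)⁻¹)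
      ≤ 4^b*(1+1/(2*a-1)) * ((1+t^2) ^ (min a b))⁻¹ := by
    calc (4:ℝ)^b * ((1+t^2)^b)⁻¹ * (∫ τ in (0:ℝ)..t, ((1 + τ ^ 2) ^ a)⁻¹)
        ≤ ((4:ℝ)^b * ((1+t^2)^(min a b))⁻¹) * (1+1/(2*a-1)) := by
          apply mull (mul_le_mul_of_nonneg_left hmb (by positivity)) pa hphia0 (by positivity)
      _ = 4^b*(1+1/(2*a-1)) * ((1+t^2) ^ (min a b))⁻¹ := by ring
  calc (∫ τ in (0:ℝ)..t, ((1 + (t-τ) ^ 2) ^ a)⁻¹ * ((1 + τ ^ 2) ^ b)⁻¹)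
      ≤ _ := main
    _ ≤ (4^a*(1+1/(2*b-1)) + 4^b*(1+1/(2*a-1))) * ((1+t^2) ^ (min a b))⁻¹ := by linarith
    _ = (4^a*(1+1/(2*b-1)) + 4^b*(1+1/(2*a-1))) / (1+t^2) ^ (min a b) := (div_eq_mul_inv _ _).symm

noncomputable section

/-- The Duhamel-type convolution integral estimate (proof of Proposition 2.2). -/
theorem duhamel_conv_estim (d : ℕ) (hd : 2 ≤ d) (p : ℝ) (hp : 0 < p) :
    ∃ C > (0 : ℝ), ∀ t ≥ (0 : ℝ),
      ((d = 2 ∧ p ≤ 1) →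
        (∫ τ in (0 : ℝ)..t,
            ((1 + (t - τ) ^ 2) ^ (((d : ℝ) - 1) / 2))⁻¹ * ((1 + τ ^ 2) ^ (p / 2))⁻¹)
          ≤ C * (1 + Real.log (1 + t ^ 2)) / (1 + t ^ 2) ^ (p / 2)) ∧
      ((d = 2 ∧ 1 < p) →
        (∫ τ in (0 : ℝ)..t,
            ((1 + (t - τ) ^ 2) ^ (((d : ℝ) - 1) / 2))⁻¹ * ((1 + τ ^ 2) ^ (p / 2))⁻¹)
          ≤ C / (1 + t ^ 2) ^ ((1 : ℝ) / 2)) ∧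
      ((2 < d ∧ p ≤ 1) →
        (∫ τ in (0 : ℝ)..t,
            ((1 + (t - τ) ^ 2) ^ (((d : ℝ) - 1) / 2))⁻¹ * ((1 + τ ^ 2) ^ (p / 2))⁻¹)
          ≤ C / (1 + t ^ 2) ^ (p / 2)) ∧
      ((2 < d ∧ 1 < p) →
        (∫ τ in (0 : ℝ)..t,
            ((1 + (t - τ) ^ 2) ^ (((d : ℝ) - 1) / 2))⁻¹ * ((1 + τ ^ 2) ^ (p / 2))⁻¹)
          ≤ C / (1 + t ^ 2) ^ (min ((d : ℝ) - 1) p / 2)) := by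
  have hb0 : 0 < p/2 := by linarith
  rcases eq_or_lt_of_le hd with hd2 | hd3
  · -- d = 2
    have hE : (((d : ℝ) - 1) / 2) = (1:ℝ)/2 := by
      rw [← hd2]; norm_num
    rcases le_or_gt p 1 with hp1 | hp1
    · refine ⟨12, by norm_num, fun t ht => ⟨?_, ?_, ?_, ?_⟩⟩
      · intro _
        rw [hE]
        exact case1 (p/2) hb0 (by linarith) t ht
      · rintro ⟨-, h⟩; linarith
      · rintro ⟨h, -⟩; omega
      · rintro ⟨h, -⟩; omega
    · have h1 : (0:ℝ) < 2*(p/2)-1 := by linarith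
      have h2 : (0:ℝ) < p/2-1/2 := by linarith
      refine ⟨2*(1+1/(2*(p/2)-1)) + 2*4^(p/2)*(1+1/(p/2-1/2)), by positivity,
        fun t ht => ⟨?_, ?_, ?_, ?_⟩⟩
      · rintro ⟨-, h⟩; linarith
      · intro _
        rw [hE]
        exact case2 (p/2) (by linarith) t ht
      · rintro ⟨h, -⟩; omega
      · rintro ⟨h, -⟩; omega
  · -- 2 < d
    have hd3' : (3:ℝ) ≤ (d:ℝ) := by exact_mod_cast hd3
    have ha : 1 ≤ ((d : ℝ) - 1) / 2 := by linarith
    have hda : (0:ℝ) < 2*(((d : ℝ) - 1) / 2)-1 := by linarith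
    rcases le_or_gt p 1 with hp1 | hp1
    · refine ⟨12*4^(((d : ℝ) - 1) / 2) + 2*(1+1/(2*(((d : ℝ) - 1) / 2)-1)), by positivity,
        fun t ht => ⟨?_, ?_, ?_, ?_⟩⟩
      · rintro ⟨h, -⟩; omega
      · rintro ⟨h, -⟩; omega
      · intro _
        exact case3 (((d : ℝ) - 1) / 2) (p/2) ha hb0 (by linarith) t ht
      · rintro ⟨-, h⟩; linarith
    · have h1 : (0:ℝ) < 2*(p/2)-1 := by linarith
      refine ⟨4^(((d : ℝ) - 1) / 2)*(1+1/(2*(p/2)-1))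
          + 4^(p/2)*(1+1/(2*(((d : ℝ) - 1) / 2)-1)), by positivity,
        fun t ht => ⟨?_, ?_, ?_, ?_⟩⟩
      · rintro ⟨h, -⟩; omega
      · rintro ⟨h, -⟩; omega
      · rintro ⟨-, h⟩; linarith
      · intro _
        have hm : min ((d : ℝ) - 1) p / 2 = min (((d : ℝ) - 1)/2) (p/2) :=
          (min_div_div_right (by norm_num) _ _).symm
        rw [hm]
        exact case4 (((d : ℝ) - 1) / 2) (p/2) (by linarith) (by linarith) t ht
end
end

section
/- Let d ≥ 1 and ρ₀ > 0. For every x ∈ ℝ^d with |x| ≤ ρ₀, every unit vector s ∈ ℝ^d, and every real R ≥ 2ρ₀, one has 0 ≤ 1 − (x·s + R)/|x + sR| ≤ 2ρ₀²/R². -/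
open scoped RealInnerProductSpace

noncomputable section

/-- The elementary geometric estimate `0 ≤ 1 − (x·s + R)/|x + Rs| ≤ 2ρ₀²/R²`
used in the proofs of Lemmas 2.3 and 2.4. -/
theorem radial_ratio_estim
    (d : ℕ) (hd : 1 ≤ d) (ρ₀ : ℝ) (hρ₀ : 0 < ρ₀)
    (x s : EuclideanSpace ℝ (Fin d)) (hx : ‖x‖ ≤ ρ₀) (hs : ‖s‖ = 1)
    (R : ℝ) (hR : 2 * ρ₀ ≤ R) :
    0 ≤ 1 - (⟪x, s⟫ + R) / ‖x + R • s‖ ∧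
      1 - (⟪x, s⟫ + R) / ‖x + R • s‖ ≤ 2 * ρ₀ ^ 2 / R ^ 2 := by
  set N := ‖x + R • s‖ with hNdef
  set a := ⟪x, s⟫ + R with hadef
  have hRpos : 0 < R := lt_of_lt_of_le (by linarith) hR
  have hCS : |⟪x, s⟫| ≤ ρ₀ := le_trans (by simpa [hs] using abs_real_inner_le_norm x s) hx
  have hCS1 : -ρ₀ ≤ ⟪x, s⟫ := by cases abs_le.mp hCS with | intro h1 h2 => linarith
  have hCS2 : ⟪x, s⟫ ≤ ρ₀ := (abs_le.mp hCS).2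
  have hN2 : N ^ 2 = ‖x‖ ^ 2 + 2 * R * ⟪x, s⟫ + R ^ 2 := by
    have := @norm_add_sq_real (EuclideanSpace ℝ (Fin d)) _ _ x (R • s)
    rw [hNdef, this, real_inner_smul_right, norm_smul, hs]
    simp [abs_of_pos hRpos]
    ring
  have hinner_sq : ⟪x, s⟫ ^ 2 ≤ ‖x‖ ^ 2 := by
    have := abs_real_inner_le_norm x s
    rw [hs, mul_one] at this
    nlinarith [abs_nonneg ⟪x, s⟫, sq_abs ⟪x, s⟫, norm_nonneg x]
  have hNa : N ^ 2 - a ^ 2 = ‖x‖ ^ 2 - ⟪x, s⟫ ^ 2 := by rw [hN2, hadef]; ring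
  have ha : R / 2 ≤ a := by rw [hadef]; linarith
  have hNnn : 0 ≤ N := norm_nonneg _
  have haN : a ≤ N := by nlinarith
  have hNpos : 0 < N := lt_of_lt_of_le (by linarith) haN
  have hx2 : ‖x‖ ^ 2 ≤ ρ₀ ^ 2 := by nlinarith [norm_nonneg x]
  constructor
  · have : a / N ≤ 1 := (div_le_one hNpos).mpr haN
    linarith
  · have key : (N - a) * R ^ 2 ≤ 2 * ρ₀ ^ 2 * N := by
      nlinarith [mul_nonneg (sub_nonneg.mpr haN) (sub_nonneg.mpr (by linarith : R ≤ N + a)),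
        sq_nonneg (N - a), mul_pos hRpos hRpos]
    have heq : 1 - a / N = (N - a) / N := by field_simp
    rw [heq, div_le_div_iff₀ hNpos (by positivity : (0:ℝ) < R ^ 2)]
    linarith
end
end
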